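/- In a position-optimization game with n > 2/p_0, every pure Nash equilibrium has at least two players at every pseudo-target x ∈ X*. -/
import Mathlib


open Finset
open scoped ENNReal Classical

noncomputable def closestSet {X Y : Type*} {n : ℕ} (d : X → Y → ℝ≥0∞) (xs : Fin n → X)
    (y : Y) : Finset (Fin n) :=
  Finset.univ.filter fun i => ∀ j, d (xs i) y ≤ d (xs j) y

/-- Player `i`'s share of target `y`: `1/|X_min|` if `i` is among the closest players, else 0. -/
noncomputable def share {X Y : Type*} {n : ℕ} (d : X → Y → ℝ≥0∞) (xs : Fin n → X) (y : Y)
    (i : Fin n) : ℝ :=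
  if i ∈ closestSet d xs y then ((closestSet d xs y).card : ℝ)⁻¹ else 0

/-- Player `i`'s expected utility `E_{y∼Q}[π_i]`. -/
noncomputable def utility {X Y : Type*} [Fintype Y] {n : ℕ} (d : X → Y → ℝ≥0∞) (Q : Y → ℝ)
    (xs : Fin n → X) (i : Fin n) : ℝ :=
  ∑ y, Q y * share d xs y i

/-- Pure Nash equilibrium: no unilateral pure deviation strictly improves utility. -/
def IsPureNash {X Y : Type*} [Fintype Y] {n : ℕ} (d : X → Y → ℝ≥0∞) (Q : Y → ℝ)
    (xs : Fin n → X) : Prop :=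
  ∀ (i : Fin n) (x' : X), utility d Q (Function.update xs i x') i ≤ utility d Q xs i

/-- The projection `P` of `Q` onto pseudo-targets: `P x = Q({y : x*(y) = x})`. -/
noncomputable def projP {X Y : Type*} [Fintype Y] (Q : Y → ℝ) (xstar : Y → X) (x : X) : ℝ :=
  ∑ y ∈ Finset.univ.filter (fun y => xstar y = x), Q y

/-- Number of players playing position `x`. -/
noncomputable def kcount {X : Type*} {n : ℕ} (xs : Fin n → X) (x : X) : ℕ :=
  (Finset.univ.filter (fun i => xs i = x)).card


section Aux

variable {X Y : Type*} [Fintype Y] {n : ℕ} (d : X → Y → ℝ≥0∞) (Q : Y → ℝ) (xs : Fin n → X)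

lemma closestSet_nonempty (hn : 0 < n) (y : Y) : (closestSet d xs y).Nonempty := by
  obtain ⟨i, -, hi⟩ := Finset.exists_min_image Finset.univ (fun i => d (xs i) y)
    ⟨⟨0, hn⟩, Finset.mem_univ _⟩
  exact ⟨i, by simpa [closestSet] using fun j => hi j (Finset.mem_univ j)⟩

lemma share_nonneg (y : Y) (i : Fin n) : 0 ≤ share d xs y i := by
  unfold share
  split
  · positivity
  · exact le_refl 0

lemma sum_share (hn : 0 < n) (y : Y) : ∑ i, share d xs y i = 1 := by
  have hne := closestSet_nonempty d xs hn y
  have hcard : ((closestSet d xs y).card : ℝ) ≠ 0 := by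
    exact_mod_cast Finset.card_ne_zero_of_mem hne.choose_spec
  unfold share
  rw [Finset.sum_ite_mem, Finset.univ_inter, Finset.sum_const, nsmul_eq_mul,
    mul_inv_cancel₀ hcard]

lemma sum_utility (hn : 0 < n) (hQsum : ∑ y, Q y = 1) : ∑ i, utility d Q xs i = 1 := by
  unfold utility
  rw [Finset.sum_comm]
  calc ∑ y, ∑ i, Q y * share d xs y i = ∑ y, Q y * ∑ i, share d xs y i := by
        simp [Finset.mul_sum]
    _ = ∑ y, Q y := by
        refine Finset.sum_congr rfl fun y _ => ?_
        rw [sum_share d xs hn y, mul_one]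
    _ = 1 := hQsum

lemma util_ge (hQ : ∀ y, 0 ≤ Q y) (xstar : Y → X)
    (hmin : ∀ y x', d (xstar y) y ≤ d x' y)
    (huniq : ∀ y, Q y ≠ 0 → ∀ x', d x' y ≤ d (xstar y) y → x' = xstar y)
    (i : Fin n) (x : X) (hx : xs i = x) :
    projP Q xstar x * ((kcount xs x : ℝ))⁻¹ ≤ utility d Q xs i := by
  have hcs : ∀ y, xstar y = x → Q y ≠ 0 →
      closestSet d xs y = Finset.univ.filter (fun j => xs j = x) := by
    intro y hy hQy
    ext j
    simp only [closestSet, Finset.mem_filter, Finset.mem_univ, true_and]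
    constructor
    · intro h
      have := h i
      rw [hx, ← hy] at this
      rw [← hy]
      exact huniq y hQy _ this
    · intro h k
      rw [h, ← hy]
      exact hmin y _
  have hshare : ∀ y, xstar y = x → Q y ≠ 0 →
      share d xs y i = ((kcount xs x : ℝ))⁻¹ := by
    intro y hy hQy
    have hmem : i ∈ Finset.univ.filter (fun j => xs j = x) := by
      simp [hx]
    simp [share, hcs y hy hQy, kcount, hmem]
  unfold utility projP
  rw [Finset.sum_mul]
  calc ∑ y ∈ Finset.univ.filter (fun y => xstar y = x), Q y * ((kcount xs x : ℝ))⁻¹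
      ≤ ∑ y ∈ Finset.univ.filter (fun y => xstar y = x), Q y * share d xs y i := by
        refine Finset.sum_le_sum fun y hy => ?_
        rcases eq_or_ne (Q y) 0 with h0 | h0
        · simp [h0]
        · rw [hshare y (by simpa using hy) h0]
    _ ≤ ∑ y, Q y * share d xs y i := by
        refine Finset.sum_le_sum_of_subset_of_nonneg (Finset.filter_subset _ _) ?_
        intro y _ _
        exact mul_nonneg (hQ y) (share_nonneg d xs y i)

lemma kcount_update (i : Fin n) (x : X) (hix : xs i ≠ x) :
    kcount (Function.update xs i x) x = kcount xs x + 1 := by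
  unfold kcount
  have hset : Finset.univ.filter (fun j => Function.update xs i x j = x)
      = insert i (Finset.univ.filter (fun j => xs j = x)) := by
    ext j
    simp only [Finset.mem_filter, Finset.mem_univ, true_and, Finset.mem_insert,
      Function.update_apply]
    by_cases hj : j = i <;> simp [hj, hix]
  rw [hset, Finset.card_insert_of_notMem (by simp [hix])]

end Aux

/-- for `n > 2/p₀`, every pure Nash equilibrium has at least two players on
every pseudo-target. -/
theorem pure_nash_two_per_target {X Y : Type*} [Fintype Y] {n : ℕ}
    (d : X → Y → ℝ≥0∞) (Q : Y → ℝ) (hQ : ∀ y, 0 ≤ Q y) (hQsum : ∑ y, Q y = 1)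
    (xstar : Y → X)
    (hmin : ∀ y x', d (xstar y) y ≤ d x' y)
    (huniq : ∀ y, Q y ≠ 0 → ∀ x', d x' y ≤ d (xstar y) y → x' = xstar y)
    (p0 : ℝ) (hp0pos : 0 < p0)
    (hp0le : ∀ y, p0 ≤ projP Q xstar (xstar y))
    (hp0mem : ∃ y, projP Q xstar (xstar y) = p0)
    (hn : 2 / p0 < n)
    (xs : Fin n → X) (hnash : IsPureNash d Q xs) :
    ∀ x ∈ Set.range xstar, 2 ≤ kcount xs x := by
  -- basic facts
  have hp0le1 : p0 ≤ 1 := by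
    obtain ⟨y0, hy0⟩ := hp0mem
    rw [← hy0]
    unfold projP
    rw [← hQsum]
    exact Finset.sum_le_sum_of_subset_of_nonneg (Finset.filter_subset _ _)
      (fun y _ _ => hQ y)
  have hnp : 2 < (n : ℝ) * p0 := by
    rw [div_lt_iff₀ hp0pos] at hn
    linarith
  have hn3 : 3 ≤ n := by
    by_contra h
    push_neg at h
    interval_cases n <;> norm_num at hnp <;> nlinarith
  have hn0 : 0 < n := by omega
  rintro x ⟨y0, rfl⟩
  set x := xstar y0 with hxdef
  have hPx : p0 ≤ projP Q xstar x := hp0le y0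
  by_contra hk
  push_neg at hk
  interval_cases hkc : kcount xs x
  · -- no player at x : minimal-utility player deviates to x
    obtain ⟨i, -, hi⟩ := Finset.exists_min_image Finset.univ (utility d Q xs)
      ⟨⟨0, hn0⟩, Finset.mem_univ _⟩
    have hsum := sum_utility d Q xs hn0 hQsum
    have hav : (n : ℝ) * utility d Q xs i ≤ 1 := by
      calc (n : ℝ) * utility d Q xs i = ∑ _j : Fin n, utility d Q xs i := by
            simp [mul_comm]
        _ ≤ ∑ j, utility d Q xs j := Finset.sum_le_sum fun j _ => hi j (Finset.mem_univ j)
        _ = 1 := hsum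
    have hix : xs i ≠ x := by
      intro h
      have hmemf : i ∈ Finset.univ.filter (fun j => xs j = x) := by simp [h]
      exact Finset.card_ne_zero_of_mem hmemf (by simpa [kcount] using hkc)
    have hk' : kcount (Function.update xs i x) x = 1 := by
      rw [kcount_update xs i x hix, hkc]
    have hlow := util_ge d Q (Function.update xs i x) hQ xstar hmin huniq i x
      (Function.update_self i x xs)
    rw [hk'] at hlow
    simp only [Nat.cast_one, inv_one, mul_one] at hlow
    have := hnash i x
    have hnpos : (0:ℝ) < n := by exact_mod_cast hn0
    nlinarith
  · -- exactly one player j at x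
    obtain ⟨j, hj⟩ := Finset.card_eq_one.mp (by simpa [kcount] using hkc)
    have hjx : xs j = x := by
      have : j ∈ Finset.univ.filter (fun i => xs i = x) := by rw [hj]; simp
      simpa using this
    have hjutil : projP Q xstar x ≤ utility d Q xs j := by
      have := util_ge d Q xs hQ xstar hmin huniq j x hjx
      rw [hkc] at this
      simpa using this
    have hne : (Finset.univ.erase j).Nonempty := by
      apply Finset.card_pos.mp
      rw [Finset.card_erase_of_mem (Finset.mem_univ j), Finset.card_univ, Fintype.card_fin]
      omega
    obtain ⟨i, hi_mem, hi⟩ := Finset.exists_min_image (Finset.univ.erase j)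
      (utility d Q xs) hne
    have hij : i ≠ j := (Finset.mem_erase.mp hi_mem).1
    have hsum := sum_utility d Q xs hn0 hQsum
    have herase : ∑ k ∈ Finset.univ.erase j, utility d Q xs k = 1 - utility d Q xs j := by
      rw [eq_sub_iff_add_eq, Finset.sum_erase_add _ _ (Finset.mem_univ j), hsum]
    have hav : ((n : ℝ) - 1) * utility d Q xs i ≤ 1 - utility d Q xs j := by
      calc ((n : ℝ) - 1) * utility d Q xs i
          = ∑ _k ∈ Finset.univ.erase j, utility d Q xs i := by
            rw [Finset.sum_const, Finset.card_erase_of_mem (Finset.mem_univ j),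
              Finset.card_univ, Fintype.card_fin, nsmul_eq_mul]
            rw [Nat.cast_sub (by omega)]
            ring
        _ ≤ ∑ k ∈ Finset.univ.erase j, utility d Q xs k :=
            Finset.sum_le_sum fun k hk => hi k hk
        _ = 1 - utility d Q xs j := herase
    have hix : xs i ≠ x := by
      intro h
      have hsub : ({i, j} : Finset (Fin n)) ⊆ Finset.univ.filter (fun k => xs k = x) := by
        intro k hk
        simp only [Finset.mem_insert, Finset.mem_singleton] at hk
        rcases hk with rfl | rfl <;> simp [h, hjx]
      have := Finset.card_le_card hsub
      rw [Finset.card_insert_of_notMem (by simpa using hij), Finset.card_singleton] at this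
      simp only [kcount] at hkc
      omega
    have hk' : kcount (Function.update xs i x) x = 2 := by
      rw [kcount_update xs i x hix, hkc]
    have hlow := util_ge d Q (Function.update xs i x) hQ xstar hmin huniq i x
      (Function.update_self i x xs)
    rw [hk'] at hlow
    have := hnash i x
    have hnpos : (0:ℝ) < n := by exact_mod_cast hn0
    have h2 : ((2:ℕ):ℝ)⁻¹ = (2:ℝ)⁻¹ := by norm_num
    rw [h2] at hlow
    nlinarith [hPx, hjutil, hav, hlow, this]
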